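/- Let ℓ be a prime and m ≥ 1, i ≥ 0 integers. Then the iterated wreath product D_{i,m} satisfies ℓ^((ℓ^i−1)/(ℓ−1)) · k(D_{i,m}) ≥ m^(ℓ^i), where (ℓ^i−1)/(ℓ−1) = 1 + ℓ + ⋯ + ℓ^{i−1}. -/

import Mathlib

/-- The shift automorphism of `ZMod n → H` by `c : ZMod n`: `(c • f) x = f (x - c)`. -/
def shiftAut (H : Type*) [Group H] (n : ℕ) (c : ZMod n) : MulAut (ZMod n → H) where
  toFun f := fun x => f (x - c)
  invFun f := fun x => f (x + c)
  left_inv f := funext fun x => by simp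
  right_inv f := funext fun x => by simp
  map_mul' f g := rfl

/-- The action of the cyclic group `C_n = Multiplicative (ZMod n)` on `ZMod n → H`
by shifting: `(c • f) x = f (x - c)`. -/
def wreathAction (H : Type*) [Group H] (n : ℕ) :
    Multiplicative (ZMod n) →* MulAut (ZMod n → H) where
  toFun c := shiftAut H n c.toAdd
  map_one' := by
    ext f x
    show f (x - (1 : Multiplicative (ZMod n)).toAdd) = f x
    rw [toAdd_one, sub_zero]
  map_mul' c d := by
    ext f x
    show f (x - (c.toAdd + d.toAdd)) = f (x - c.toAdd - d.toAdd)
    rw [sub_sub]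

/-- The wreath product `H ≀ C_n`: the semidirect product `(ZMod n → H) ⋊ C_n`,
where `c ∈ C_n = ZMod n` acts on `f : ZMod n → H` by `(c • f) x = f (x - c)`. -/
abbrev WreathCyclic (H : Type*) [Group H] (n : ℕ) : Type _ :=
  SemidirectProduct (ZMod n → H) (Multiplicative (ZMod n)) (wreathAction H n)

/-- The iterated wreath product `D_{i,m} = C_m ≀ C_ℓ ≀ ⋯ ≀ C_ℓ` (with `i` factors `C_ℓ`),
bundled together with its group structure. -/
noncomputable def iterWreathAux (ℓ m : ℕ) : ℕ → (T : Type) × Group T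
  | 0 => ⟨Multiplicative (ZMod m), inferInstance⟩
  | i + 1 =>
    let p := iterWreathAux ℓ m i
    letI : Group p.1 := p.2
    ⟨WreathCyclic p.1 ℓ, inferInstance⟩

/-- The iterated wreath product `D_{i,m} = C_m ≀ C_ℓ ≀ ⋯ ≀ C_ℓ` with `i` factors `C_ℓ`. -/
noncomputable def IterWreath (ℓ m i : ℕ) : Type := (iterWreathAux ℓ m i).1

noncomputable instance (ℓ m i : ℕ) : Group (IterWreath ℓ m i) := (iterWreathAux ℓ m i).2

/-! Gallagher's inequality `Pr(A) ≤ Pr(G) [G : A]²` for commuting probabilities turns into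
`|A| ≤ [G : A] k(G)` when `A ≤ G` is abelian. In `D_{i,m}` the iterated base group
`C_m^{ℓ^i}` is abelian of index `ℓ^(1 + ℓ + ⋯ + ℓ^(i-1))`, since passing from `H` to `H ≀ C_ℓ`
replaces a subgroup `A ≤ H` by `A^ℓ`, of index `[H : A]^ℓ · ℓ`. -/

open Finset

theorem Subgroup.card_le_index_mul_card_conjClasses {G : Type*} [Group G] [Finite G]
    (A : Subgroup G) [IsMulCommutative A] :
    Nat.card A ≤ A.index * Nat.card (ConjClasses G) := by
  have hi : 0 < A.index := Nat.pos_of_ne_zero A.index_ne_zero_of_finite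
  have hG : (0 : ℚ) < ↑(Nat.card A * A.index) := by exact_mod_cast Nat.mul_pos Nat.card_pos hi
  have h := A.commProb_subgroup_le
  rw [commProb_eq_one_iff.mpr ‹_›, commProb_def', ← A.card_mul_index, div_mul_eq_mul_div,
    le_div_iff₀ hG] at h
  refine Nat.le_of_mul_le_mul_right (c := A.index) ?_ hi
  exact_mod_cast (by push_cast at h; linarith :
    (Nat.card A : ℚ) * A.index ≤ A.index * Nat.card (ConjClasses G) * A.index)

instance Subgroup.pi_isMulCommutative {ι : Type*} {G : ι → Type*} [∀ i, Group (G i)]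
    (A : ∀ i, Subgroup (G i)) [∀ i, IsMulCommutative (A i)] :
    IsMulCommutative (Subgroup.pi Set.univ A) :=
  isMulCommutative_iff.mpr fun f g => Subtype.ext <| funext fun i =>
    setLike_mul_comm (s := A i) (f.2 i trivial) (g.2 i trivial)

lemma Subgroup.card_pi {ι : Type*} [Fintype ι] {G : ι → Type*} [∀ i, Group (G i)]
    (A : ∀ i, Subgroup (G i)) : Nat.card (Subgroup.pi Set.univ A) = ∏ i, Nat.card (A i) :=
  (Nat.card_congr (Equiv.Set.univPi fun i => (A i : Set (G i)))).trans Nat.card_pi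

namespace WreathCyclic

variable {H : Type*} [Group H] {n : ℕ}

instance [Finite H] [NeZero n] : Finite (WreathCyclic H n) :=
  Finite.of_equiv _ SemidirectProduct.equivProd.symm

def baseSubgroup (n : ℕ) (A : Subgroup H) : Subgroup (WreathCyclic H n) :=
  (Subgroup.pi Set.univ fun _ => A).map SemidirectProduct.inl

instance (A : Subgroup H) [IsMulCommutative A] : IsMulCommutative (baseSubgroup n A) := by
  unfold baseSubgroup; infer_instance

lemma card_baseSubgroup [NeZero n] (A : Subgroup H) :
    Nat.card (baseSubgroup n A) = Nat.card A ^ n := by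
  rw [baseSubgroup, Subgroup.card_map_of_injective SemidirectProduct.inl_injective,
    Subgroup.card_pi, prod_const, card_univ, ZMod.card]

lemma index_baseSubgroup [NeZero n] (A : Subgroup H) :
    (baseSubgroup n A).index = A.index ^ n * n := by
  rw [baseSubgroup, Subgroup.index_map_of_injective _ SemidirectProduct.inl_injective,
    SemidirectProduct.range_inl_eq_ker_rightHom, Subgroup.index_ker,
    MonoidHom.range_eq_top.mpr SemidirectProduct.rightHom_surjective, Subgroup.card_top,
    Subgroup.index_pi, prod_const, card_univ, ZMod.card, Nat.card_congr Multiplicative.toAdd,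
    Nat.card_zmod]

end WreathCyclic

namespace IterWreath

variable {ℓ m : ℕ}

instance finite [NeZero ℓ] [NeZero m] (i : ℕ) : Finite (IterWreath ℓ m i) := by
  induction i with
  | zero => exact Finite.of_equiv (ZMod m) Multiplicative.ofAdd
  | succ i ih => exact (inferInstance : Finite (WreathCyclic (IterWreath ℓ m i) ℓ))

lemma exists_isMulCommutative_subgroup [NeZero ℓ] (m i : ℕ) :
    ∃ A : Subgroup (IterWreath ℓ m i), IsMulCommutative A ∧
      Nat.card A = m ^ ℓ ^ i ∧ A.index = ℓ ^ ∑ j ∈ range i, ℓ ^ j := by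
  induction i with
  | zero =>
    refine ⟨⊤, inferInstanceAs (IsMulCommutative (⊤ : Subgroup (Multiplicative (ZMod m)))), ?_, ?_⟩
    · rw [Subgroup.card_top, pow_zero, pow_one]
      exact (Nat.card_congr Multiplicative.toAdd).trans (Nat.card_zmod m)
    · simp
  | succ i ih =>
    obtain ⟨A, hA, hcard, hindex⟩ := ih
    change ∃ B : Subgroup (WreathCyclic (IterWreath ℓ m i) ℓ), IsMulCommutative B ∧
      Nat.card B = m ^ ℓ ^ (i + 1) ∧ B.index = ℓ ^ ∑ j ∈ range (i + 1), ℓ ^ j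
    refine ⟨WreathCyclic.baseSubgroup ℓ A, inferInstance, ?_, ?_⟩
    · rw [WreathCyclic.card_baseSubgroup, hcard, ← pow_mul, pow_succ]
    · rw [WreathCyclic.index_baseSubgroup, hindex, geom_sum_succ, pow_succ, ← pow_mul, mul_comm ℓ]

end IterWreath

theorem card_conjClasses_iterWreath (ℓ : ℕ) (hℓ : ℓ.Prime) (m : ℕ) (hm : 1 ≤ m) (i : ℕ) :
    m ^ ℓ ^ i ≤ ℓ ^ ((ℓ ^ i - 1) / (ℓ - 1)) * Nat.card (ConjClasses (IterWreath ℓ m i)) := by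
  have : NeZero ℓ := ⟨hℓ.ne_zero⟩
  have : NeZero m := ⟨by omega⟩
  obtain ⟨A, hA, hcard, hindex⟩ := IterWreath.exists_isMulCommutative_subgroup (ℓ := ℓ) m i
  rw [← Nat.geomSum_eq hℓ.two_le, ← hcard, ← hindex]
  exact A.card_le_index_mul_card_conjClasses
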